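/- Noetherianness of adic completions along finitely generated ideals. Let B be a commutative ring and I ⊆ B a finitely generated ideal such that the quotient ring B/I is noetherian. Then the I-adic completion B̂ := lim_n B/I^n is a noetherian ring. -/

import Mathlib

/-!
Let `J = (x_1, …, x_k)` be an ideal of a `J`-adically complete ring `A` with `A ⧸ J` noetherian.
A homogeneous polynomial of degree `n` over `A ⧸ J` represents, via `X i ↦ x i`, an element of
`J ^ n / J ^ (n + 1)`, so the leading forms of an ideal `K` generate an ideal of the noetherian
ring `(A ⧸ J)[X_1, …, X_k]`. Pick finitely many `a_i ∈ K` whose leading forms generate it; then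
every `b ∈ K ∩ J ^ m` agrees modulo `J ^ (m + 1)` with some `∑ c_i a_i`, `c_i ∈ J ^ (m - n_i)`.
Iterating, the coefficient series converge by completeness and `K = (a_i)`. This applies to the
completion `B̂` of `B` along a finitely generated `I`: it is `I B̂`-adically complete and
`B̂ ⧸ I B̂ ≅ B ⧸ I`.
-/

open Finset MvPolynomial

theorem IsPrecomplete.exists_sub_sum_range_mem {R M : Type*} [CommRing R] [AddCommGroup M]
    [Module R M] {I : Ideal R} [IsPrecomplete I M] (c : ℕ → M) (s : ℕ)
    (hc : ∀ j, c j ∈ (I ^ (j - s) • ⊤ : Submodule R M)) :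
    ∃ L, ∀ n, L - ∑ j ∈ range n, c j ∈ (I ^ (n - s) • ⊤ : Submodule R M) := by
  have hcauchy : ∀ {m n}, m ≤ n → ∑ j ∈ range (m + s), c j ≡ ∑ j ∈ range (n + s), c j
      [SMOD (I ^ m • ⊤ : Submodule R M)] := by
    intro m n hmn
    rw [SModEq.comm, SModEq.sub_mem, ← sum_Ico_eq_sub _ (by omega)]
    exact Submodule.sum_mem _ fun j hj ↦
      Submodule.pow_smul_top_le I M (by simp at hj; omega) (hc j)
  obtain ⟨L, hL⟩ := IsPrecomplete.prec ‹_› hcauchy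
  refine ⟨L, fun n ↦ ?_⟩
  rcases le_or_gt n s with hns | hsn
  · simp [Nat.sub_eq_zero_of_le hns]
  · have := (hL (n - s)).symm
    rwa [SModEq.sub_mem, Nat.sub_add_cancel hsn.le] at this

namespace MvPolynomial

variable {σ R S : Type*} [CommRing R] [CommRing S]

attribute [local instance] gradedAlgebra in
theorem homogeneousComponent_mul_of_isHomogeneous {g : MvPolynomial σ R} {e : ℕ}
    (hg : g.IsHomogeneous e) (h : MvPolynomial σ R) (n : ℕ) :
    homogeneousComponent n (h * g) = if e ≤ n then homogeneousComponent (n - e) h * g else 0 := by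
  have := DirectSum.coe_decompose_mul_of_right_mem (homogeneousSubmodule σ R) n (a := h) hg
  have hdec (p : MvPolynomial σ R) (m : ℕ) :
      (DirectSum.decompose (homogeneousSubmodule σ R) p m : MvPolynomial σ R) =
        homogeneousComponent m p :=
    decomposition.decompose'_apply p m
  rwa [hdec, hdec] at this

theorem map_homogeneousComponent (f : R →+* S) (n : ℕ) (p : MvPolynomial σ R) :
    map f (homogeneousComponent n p) = homogeneousComponent n (map f p) := by
  ext d
  rw [coeff_map, coeff_homogeneousComponent, coeff_homogeneousComponent, coeff_map]
  split_ifs <;> simp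

theorem exists_isHomogeneous_map_eq {f : R →+* S} (hf : Function.Surjective f)
    {g : MvPolynomial σ S} {n : ℕ} (hg : g.IsHomogeneous n) :
    ∃ p : MvPolynomial σ R, p.IsHomogeneous n ∧ map f p = g := by
  obtain ⟨p, rfl⟩ := map_surjective f hf g
  exact ⟨homogeneousComponent n p, homogeneousComponent_isHomogeneous n p,
    by rw [map_homogeneousComponent, homogeneousComponent_eq_self hg]⟩

/-- In `S[X]`, a homogeneous element of an ideal generated by homogeneous elements is a combination
of the generators with homogeneous coefficients (compare degree-`m` components); here that fact is
lifted along `f`. -/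
theorem exists_isHomogeneous_sub_sum_mul {f : R →+* S} (hf : Function.Surjective f)
    {ι : Type*} [Fintype ι] {n : ι → ℕ} {P : ι → MvPolynomial σ R}
    (hP : ∀ i, (P i).IsHomogeneous (n i)) {m : ℕ} {p : MvPolynomial σ R} (hp : p.IsHomogeneous m)
    (hpP : map f p ∈ Ideal.span (Set.range fun i ↦ map f (P i))) :
    ∃ q : ι → MvPolynomial σ R, (∀ i, (q i).IsHomogeneous (m - n i)) ∧
      (p - ∑ i, q i * P i).IsHomogeneous m ∧ map f (p - ∑ i, q i * P i) = 0 := by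
  obtain ⟨h, hh⟩ := (Submodule.mem_span_range_iff_exists_fun _).1 hpP
  have hlift (i : ι) : ∃ q : MvPolynomial σ R, q.IsHomogeneous (m - n i) ∧
      (q * P i).IsHomogeneous m ∧
      map f (q * P i) = homogeneousComponent m (h i * map f (P i)) := by
    rw [homogeneousComponent_mul_of_isHomogeneous ((hP i).map f)]
    split_ifs with hi
    · obtain ⟨q, hq, hqh⟩ :=
        exists_isHomogeneous_map_eq hf (homogeneousComponent_isHomogeneous (m - n i) (h i))
      exact ⟨q, hq, Nat.sub_add_cancel hi ▸ hq.mul (hP i), by rw [map_mul, hqh]⟩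
    · exact ⟨0, isHomogeneous_zero .., by simpa using isHomogeneous_zero .., by simp⟩
  choose q hq hqP hqf using hlift
  refine ⟨q, hq, hp.sub (IsHomogeneous.sum _ _ _ fun i _ ↦ hqP i), ?_⟩
  rw [map_sub, map_sum, sub_eq_zero]
  simp_rw [hqf, ← map_sum, ← smul_eq_mul, hh, homogeneousComponent_eq_self (hp.map f)]

theorem eval_mem_pow_succ {x : σ → R} {p : MvPolynomial σ R} {m : ℕ} (hp : p.IsHomogeneous m)
    (hcoeff : ∀ d, coeff d p ∈ Ideal.span (Set.range x)) :
    eval x p ∈ Ideal.span (Set.range x) ^ (m + 1) := by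
  rw [p.as_sum, map_sum, pow_succ']
  refine Ideal.sum_mem _ fun d hd ↦ ?_
  rw [eval_monomial]
  refine Ideal.mul_mem_mul (hcoeff d) ((Ideal.mem_span_pow_iff_exists_isHomogeneous _ _).2
    ⟨monomial d 1, isWeightedHomogeneous_monomial _ _ _ (hp (mem_support_iff.mp hd)), ?_⟩)
  rw [eval_monomial, one_mul]

end MvPolynomial

theorem IsAdicComplete.eq_span_of_forall_exists_sub_sum_mul_mem {A : Type*} [CommRing A]
    {J : Ideal A} [IsAdicComplete J A] {K : Ideal A}
    {ι : Type*} [Fintype ι] {a : ι → A} {n : ι → ℕ} (haK : ∀ i, a i ∈ K)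
    (haJ : ∀ i, a i ∈ J ^ n i)
    (happrox : ∀ m, ∀ b ∈ K, b ∈ J ^ m →
      ∃ c : ι → A, (∀ i, c i ∈ J ^ (m - n i)) ∧ b - ∑ i, c i * a i ∈ J ^ (m + 1)) :
    K = Ideal.span (Set.range a) := by
  refine le_antisymm (fun b hb ↦ ?_) (Ideal.span_le.2 (Set.range_subset_iff.2 haK))
  choose! c hcJ hcsub using happrox
  let d : ℕ → A := fun m ↦ Nat.rec b (fun m dm ↦ dm - ∑ i, c m dm i * a i) m
  have hd (m : ℕ) : d m ∈ K ∧ d m ∈ J ^ m := by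
    induction m with
    | zero => exact ⟨hb, by simp⟩
    | succ m ih =>
      exact ⟨K.sub_mem ih.1 (K.sum_mem fun i _ ↦ K.mul_mem_left _ (haK i)),
        hcsub m (d m) ih.1 ih.2⟩
  have hd_eq (M : ℕ) : d M = b - ∑ i, (∑ m ∈ range M, c m (d m) i) * a i := by
    induction M with
    | zero => simp [d]
    | succ M ih =>
      simp only [sum_range_succ, add_mul, sum_add_distrib]
      rw [← sub_sub, ← ih]
  have hconv (i : ι) : ∃ L, ∀ M, L - ∑ m ∈ range M, c m (d m) i ∈ J ^ (M - n i) := by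
    simpa using IsPrecomplete.exists_sub_sum_range_mem (I := J) (fun m ↦ c m (d m) i) (n i)
      (fun m ↦ by simpa using hcJ m (d m) (hd m).1 (hd m).2 i)
  choose L hL using hconv
  have hb_eq : b = ∑ i, L i * a i := by
    rw [← sub_eq_zero]
    refine IsHausdorff.haus' (I := J) _ fun M ↦ ?_
    have hsplit : b - ∑ i, L i * a i =
        d M - ∑ i, (L i - ∑ m ∈ range M, c m (d m) i) * a i := by
      rw [hd_eq M]
      simp only [sub_mul, sum_sub_distrib]
      ring
    rw [SModEq.zero, hsplit]
    simp only [smul_eq_mul, Ideal.mul_top]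
    refine (J ^ M).sub_mem (hd M).2 (Ideal.sum_mem _ fun i _ ↦ ?_)
    exact Ideal.pow_le_pow_right (by omega) (pow_add J _ _ ▸ Ideal.mul_mem_mul (hL i M) (haJ i))
  rw [hb_eq]
  exact Ideal.sum_mem _ fun i _ ↦ Ideal.mul_mem_left _ _ (Ideal.subset_span ⟨i, rfl⟩)

section LeadingForms

variable {A σ : Type*} [CommRing A] (x : σ → A)

local notation "J" => Ideal.span (Set.range x)

/-- A homogeneous polynomial of degree `n` over `A ⧸ J` stands, via `X i ↦ x i`, for an element
of `J ^ n / J ^ (n + 1)`; the leading forms of `K` are those standing for the class of some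
element of `K ∩ J ^ n`. -/
def Ideal.leadingForms (K : Ideal A) : Set (MvPolynomial σ (A ⧸ J)) :=
  {g | ∃ (n : ℕ) (p : MvPolynomial σ A), p.IsHomogeneous n ∧
    MvPolynomial.map (Ideal.Quotient.mk J) p = g ∧
    ∃ a ∈ K, a - eval x p ∈ J ^ (n + 1)}

variable {x}

theorem Ideal.exists_sub_sum_mul_mem_pow_succ {K : Ideal A} {ι : Type*} [Fintype ι] {n : ι → ℕ}
    {P : ι → MvPolynomial σ A} (hP : ∀ i, (P i).IsHomogeneous (n i)) {a : ι → A}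
    (hPa : ∀ i, a i - eval x (P i) ∈ J ^ (n i + 1))
    (hK : K.leadingForms x ⊆
      Ideal.span (Set.range fun i ↦ MvPolynomial.map (Ideal.Quotient.mk J) (P i)))
    {m : ℕ} {b : A} (hbK : b ∈ K) (hbm : b ∈ J ^ m) :
    ∃ c : ι → A, (∀ i, c i ∈ J ^ (m - n i)) ∧ b - ∑ i, c i * a i ∈ J ^ (m + 1) := by
  obtain ⟨p, hp, rfl⟩ := (Ideal.mem_span_pow_iff_exists_isHomogeneous x b).1 hbm
  obtain ⟨q, hq, hw, hw0⟩ := exists_isHomogeneous_sub_sum_mul Ideal.Quotient.mk_surjective hP hp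
    (hK ⟨m, p, hp, rfl, eval x p, hbK, by simp⟩)
  refine ⟨fun i ↦ eval x (q i),
    fun i ↦ (Ideal.mem_span_pow_iff_exists_isHomogeneous x _).2 ⟨q i, hq i, rfl⟩, ?_⟩
  have hsplit : eval x p - ∑ i, eval x (q i) * a i =
      eval x (p - ∑ i, q i * P i) - ∑ i, eval x (q i) * (a i - eval x (P i)) := by
    simp only [map_sub, map_sum, map_mul, mul_sub, sum_sub_distrib]
    ring
  rw [hsplit]
  refine Ideal.sub_mem _ (eval_mem_pow_succ hw fun d ↦ ?_) (Ideal.sum_mem _ fun i _ ↦ ?_)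
  · rw [← Ideal.Quotient.eq_zero_iff_mem, ← coeff_map, hw0, coeff_zero]
  · refine Ideal.pow_le_pow_right (show m + 1 ≤ m - n i + (n i + 1) by omega) ?_
    rw [pow_add]
    exact Ideal.mul_mem_mul
      ((Ideal.mem_span_pow_iff_exists_isHomogeneous x _).2 ⟨q i, hq i, rfl⟩) (hPa i)

end LeadingForms

theorem IsAdicComplete.isNoetherianRing {A : Type*} [CommRing A] {J : Ideal A} (hJ : J.FG)
    [IsAdicComplete J A] [IsNoetherianRing (A ⧸ J)] : IsNoetherianRing A := by
  obtain ⟨k, x, rfl⟩ := Submodule.fg_iff_exists_fin_generating_family.1 hJ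
  refine (isNoetherianRing_iff_ideal_fg A).2 fun K ↦ ?_
  obtain ⟨t, ht, hspan⟩ := (Submodule.fg_span_iff_fg_span_finset_subset (K.leadingForms x)).1
    (IsNoetherian.noetherian (Ideal.span (K.leadingForms x)))
  choose n P hP hPt a haK hPa using fun g : t ↦ ht g.2
  have hrange : (Set.range fun g ↦ map (Ideal.Quotient.mk (Ideal.span (Set.range x))) (P g)) =
      (t : Set (MvPolynomial (Fin k) (A ⧸ Ideal.span (Set.range x)))) := by
    simp [hPt]
  rw [IsAdicComplete.eq_span_of_forall_exists_sub_sum_mul_mem haK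
    (fun g ↦ ?_) fun m b hbK hbm ↦ Ideal.exists_sub_sum_mul_mem_pow_succ hP hPa ?_ hbK hbm]
  · exact Submodule.fg_span (Set.finite_range a)
  · simpa using Ideal.add_mem _ (Ideal.pow_le_pow_right (Nat.le_succ _) (hPa g))
      ((Ideal.mem_span_pow_iff_exists_isHomogeneous x _).2 ⟨P g, hP g, rfl⟩)
  · rw [hrange]
    exact fun g hg ↦ hspan.le (Ideal.subset_span hg)

open AdicCompletion in
/-- Noetherianness of adic completions along finitely generated ideals:
if `B` is a commutative ring and `I ⊆ B` a finitely generated ideal such that `B/I` is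
noetherian, then the `I`-adic completion `B̂ = lim_n B/I^n` is a noetherian ring. -/
theorem statement_16 (B : Type*) [CommRing B] (I : Ideal B) (hfg : I.FG)
    (hquot : IsNoetherianRing (B ⧸ I)) :
    IsNoetherianRing (AdicCompletion I B) := by
  have : IsAdicComplete (I.map (algebraMap B (AdicCompletion I B))) (AdicCompletion I B) :=
    (IsAdicComplete.map_algebraMap_iff _ _).2 (isAdicComplete hfg)
  have : IsNoetherianRing (AdicCompletion I B ⧸ I.map (algebraMap B (AdicCompletion I B))) :=
    isNoetherianRing_of_ringEquiv (B ⧸ I)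
      ((Ideal.quotEquivOfEq (ker_evalOneₐ_eq_map I hfg).symm).trans
        (RingHom.quotientKerEquivOfSurjective (evalOneₐ_surjective I))).symm
  exact IsAdicComplete.isNoetherianRing (hfg.map (algebraMap B (AdicCompletion I B)))
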